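/- Topological representation theorem for EDC-lattices: Let D be an EDC-lattice. Then there exist a topological space X and a map h : D → (subsets of X) such that: every h(a) is regular closed; h is injective; h(0) = ∅, h(1) = X; h(a+b) = h(a) ∪ h(b); h(a·b) = Cl(Int(h(a) ∩ h(b))); a ≤ b iff h(a) ⊆ h(b); and for all a, b ∈ D: a C b iff h(a) ∩ h(b) ≠ ∅; a Ĉ b iff Int(h(a)) ∪ Int(h(b)) ≠ X; a ≪ b iff h(a) ⊆ Int(h(b)). -/

import Mathlib

universe u

/-- Extended distributive contact lattice (EDC-lattice): a bounded distributive
lattice with contact `C`, dual contact `Cd` and nontangential part-of `Ll`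
satisfying the 23 axioms. -/
structure EDC (D : Type u) [DistribLattice D] [BoundedOrder D] where
  C : D → D → Prop
  Cd : D → D → Prop
  Ll : D → D → Prop
  c1 : ∀ a b, C a b → a ≠ ⊥ ∧ b ≠ ⊥
  c2 : ∀ a a' b b', C a b → a ≤ a' → b ≤ b' → C a' b'
  c3 : ∀ a b c, C a (b ⊔ c) → C a b ∨ C a c
  c4 : ∀ a b, C a b → C b a
  c5 : ∀ a b, a ⊓ b ≠ ⊥ → C a b
  cd1 : ∀ a b, Cd a b → a ≠ ⊤ ∧ b ≠ ⊤
  cd2 : ∀ a a' b b', Cd a b → a' ≤ a → b' ≤ b → Cd a' b'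
  cd3 : ∀ a b c, Cd a (b ⊓ c) → Cd a b ∨ Cd a c
  cd4 : ∀ a b, Cd a b → Cd b a
  cd5 : ∀ a b, a ⊔ b ≠ ⊤ → Cd a b
  ll1 : Ll ⊥ ⊥
  ll2 : Ll ⊤ ⊤
  ll3 : ∀ a b, Ll a b → a ≤ b
  ll4 : ∀ a a' b b', a' ≤ a → Ll a b → b ≤ b' → Ll a' b'
  ll5 : ∀ a b c, Ll a c → Ll b c → Ll (a ⊔ b) c
  ll6 : ∀ a b c, Ll c a → Ll c b → Ll c (a ⊓ b)
  ll7 : ∀ a b c d, Ll a b → Ll (b ⊓ c) d → Ll c (a ⊔ d) → Ll c d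
  mc1 : ∀ a b c, C a b → Ll a c → C a (b ⊓ c)
  mc2 : ∀ a b c d, ¬ C a (b ⊓ c) → C a b → ¬ C (a ⊓ d) b → Cd d c
  mcd1 : ∀ a b c, Cd a b → Ll c a → Cd a (b ⊔ c)
  mcd2 : ∀ a b c d, ¬ Cd a (b ⊔ c) → Cd a b → ¬ Cd (a ⊔ d) b → C d c
  mll1 : ∀ a b c, ¬ Cd a b → Ll (a ⊓ c) b → Ll c b
  mll2 : ∀ a b c, ¬ C a b → Ll b (a ⊔ c) → Ll b c

/-- A filter of a bounded (distributive) lattice. -/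
def EDCFilter {D : Type u} [DistribLattice D] [BoundedOrder D] (F : Set D) : Prop :=
  ⊤ ∈ F ∧ (∀ a b : D, a ∈ F → a ≤ b → b ∈ F) ∧ (∀ a b : D, a ∈ F → b ∈ F → a ⊓ b ∈ F)

/-- An ideal of a bounded (distributive) lattice. -/
def EDCIdeal {D : Type u} [DistribLattice D] [BoundedOrder D] (I : Set D) : Prop :=
  ⊥ ∈ I ∧ (∀ a b : D, a ∈ I → b ≤ a → b ∈ I) ∧ (∀ a b : D, a ∈ I → b ∈ I → a ⊔ b ∈ I)

/-- A prime filter: a proper filter such that `a ⊔ b ∈ F` implies `a ∈ F` or `b ∈ F`. -/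
def PrimeFilter {D : Type u} [DistribLattice D] [BoundedOrder D] (F : Set D) : Prop :=
  EDCFilter F ∧ ⊥ ∉ F ∧ ∀ a b : D, a ⊔ b ∈ F → a ∈ F ∨ b ∈ F

/-- The canonical relation `R^c` between (prime) filters of an EDC-lattice. -/
def Rc {D : Type u} [DistribLattice D] [BoundedOrder D] (E : EDC D) (Γ Δ : Set D) : Prop :=
  ∀ a b : D,
    (a ∈ Γ → b ∈ Δ → E.C a b) ∧
    (a ∉ Γ → b ∉ Δ → E.Cd a b) ∧
    (a ∈ Γ → b ∉ Δ → ¬ E.Ll a b) ∧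
    (a ∉ Γ → b ∈ Δ → ¬ E.Ll b a)

/-!
The points of the space are the pairs `(Γ, Δ)` of prime filters with `Rc E Γ Δ`, and `a` is sent
to the points with `a ∈ Γ ∨ a ∈ Δ`. A set is open when it contains, along with each point
`(Γ, Δ)`, the diagonal points `(Γ, Γ)` and `(Δ, Δ)`; then the interior of the image of `a` is the
set of points with `a` in both filters, so images are regular closed and the lattice operations
are preserved by primeness. Each of `C a b`, `Cd a b` and `¬ Ll a b` is witnessed by a point:
a maximal pair of filters on which the relation holds (Zorn) consists of prime filters, and the
mixed axioms `mc1`–`mll2` together with `ll7` show that it is `Rc`-related. For `Cd` and `Ll` one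
side of the pair is built in the order dual, where prime filters are complements of prime filters.
-/

section Filters

variable {α β : Type*} [DistribLattice α] [BoundedOrder α] [DistribLattice β] [BoundedOrder β]

namespace EDCFilter

variable {F : Set α}

theorem top_mem (hF : EDCFilter F) : ⊤ ∈ F := hF.1

theorem mem_of_le (hF : EDCFilter F) {a b : α} (ha : a ∈ F) (hab : a ≤ b) : b ∈ F :=
  hF.2.1 a b ha hab

theorem inf_mem (hF : EDCFilter F) {a b : α} (ha : a ∈ F) (hb : b ∈ F) : a ⊓ b ∈ F :=
  hF.2.2 a b ha hb

theorem Ici (a : α) : EDCFilter (Set.Ici a) :=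
  ⟨le_top, fun _ _ hx hxy => le_trans hx hxy, fun _ _ hx hy => le_inf hx hy⟩

theorem sUnion_of_isChain {c : Set (Set α)} (hc : ∀ F ∈ c, EDCFilter F)
    (hchain : IsChain (· ⊆ ·) c) (hne : c.Nonempty) : EDCFilter (⋃₀ c) := by
  obtain ⟨F, hF⟩ := hne
  refine ⟨⟨F, hF, (hc F hF).top_mem⟩, ?_, ?_⟩
  · rintro x y ⟨G, hG, hx⟩ hxy
    exact ⟨G, hG, (hc G hG).mem_of_le hx hxy⟩
  · rintro x y ⟨G, hG, hx⟩ ⟨H, hH, hy⟩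
    rcases hchain.total hG hH with hGH | hHG
    · exact ⟨H, hH, (hc H hH).inf_mem (hGH hx) hy⟩
    · exact ⟨G, hG, (hc G hG).inf_mem hx (hHG hy)⟩

theorem adjoin (hF : EDCFilter F) (x : α) : EDCFilter {z | ∃ u ∈ F, u ⊓ x ≤ z} := by
  refine ⟨⟨⊤, hF.top_mem, le_top⟩, ?_, ?_⟩
  · rintro z w ⟨u, hu, huz⟩ hzw
    exact ⟨u, hu, huz.trans hzw⟩
  · rintro z w ⟨u, hu, huz⟩ ⟨v, hv, hvw⟩
    exact ⟨u ⊓ v, hF.inf_mem hu hv,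
      le_inf ((inf_le_inf_right x inf_le_left).trans huz)
        ((inf_le_inf_right x inf_le_right).trans hvw)⟩

end EDCFilter

namespace EDCIdeal

variable {I : Set α}

theorem bot_mem (hI : EDCIdeal I) : ⊥ ∈ I := hI.1

theorem mem_of_le (hI : EDCIdeal I) {a b : α} (ha : a ∈ I) (hba : b ≤ a) : b ∈ I :=
  hI.2.1 a b ha hba

theorem sup_mem (hI : EDCIdeal I) {a b : α} (ha : a ∈ I) (hb : b ∈ I) : a ⊔ b ∈ I :=
  hI.2.2 a b ha hb

theorem Iic (a : α) : EDCIdeal (Set.Iic a) :=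
  ⟨bot_le, fun _ _ hx hyx => le_trans hyx hx, fun _ _ hx hy => sup_le hx hy⟩

end EDCIdeal

namespace PrimeFilter

variable {F : Set α}

theorem top_mem (hF : PrimeFilter F) : ⊤ ∈ F := hF.1.top_mem

theorem bot_notMem (hF : PrimeFilter F) : ⊥ ∉ F := hF.2.1

theorem mem_of_le (hF : PrimeFilter F) {a b : α} (ha : a ∈ F) (hab : a ≤ b) : b ∈ F :=
  hF.1.mem_of_le ha hab

theorem inf_mem (hF : PrimeFilter F) {a b : α} (ha : a ∈ F) (hb : b ∈ F) : a ⊓ b ∈ F :=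
  hF.1.inf_mem ha hb

theorem mem_or_mem (hF : PrimeFilter F) {a b : α} (hab : a ⊔ b ∈ F) : a ∈ F ∨ b ∈ F :=
  hF.2.2 a b hab

theorem inf_mem_iff (hF : PrimeFilter F) {a b : α} : a ⊓ b ∈ F ↔ a ∈ F ∧ b ∈ F :=
  ⟨fun h => ⟨hF.mem_of_le h inf_le_left, hF.mem_of_le h inf_le_right⟩,
    fun h => hF.inf_mem h.1 h.2⟩

theorem sup_mem_iff (hF : PrimeFilter F) {a b : α} : a ⊔ b ∈ F ↔ a ∈ F ∨ b ∈ F :=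
  ⟨hF.mem_or_mem, fun h => h.elim (hF.mem_of_le · le_sup_left) (hF.mem_of_le · le_sup_right)⟩

theorem compl_dual {G : Set αᵒᵈ} (hG : PrimeFilter G) :
    PrimeFilter {z : α | OrderDual.toDual z ∉ G} := by
  refine ⟨⟨hG.bot_notMem, fun z w hz hzw hw => hz (hG.mem_of_le hw hzw), ?_⟩,
    fun h => h hG.top_mem, fun z w hzw => ?_⟩
  · intro z w hz hw hzw
    exact (hG.mem_or_mem hzw).elim hz hw
  · by_contra! h
    exact hzw (hG.inf_mem (not_not.1 h.1) (not_not.1 h.2))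

end PrimeFilter

theorem exists_primeFilter_maximal_disjoint {I : Set α} (hI : EDCIdeal I) {a : α} (ha : a ∉ I) :
    ∃ F : Set α, PrimeFilter F ∧ a ∈ F ∧ Disjoint F I ∧ ∀ x ∉ F, ∃ u ∈ F, u ⊓ x ∈ I := by
  obtain ⟨F, haF, hmax⟩ := zorn_subset_nonempty {F | EDCFilter F ∧ Disjoint F I}
    (fun c hc hchain hne => ⟨⋃₀ c,
      ⟨EDCFilter.sUnion_of_isChain (fun F hF => (hc hF).1) hchain hne,
        Set.disjoint_sUnion_left.2 fun F hF => (hc hF).2⟩,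
      fun _ => Set.subset_sUnion_of_mem⟩)
    (Set.Ici a)
    ⟨EDCFilter.Ici a, Set.disjoint_left.2 fun _ hx hxI => ha (hI.mem_of_le hxI hx)⟩
  obtain ⟨hF, hFI⟩ := hmax.prop
  have hmaximal : ∀ x ∉ F, ∃ u ∈ F, u ⊓ x ∈ I := by
    intro x hx
    by_contra! h
    have hdisj : Disjoint {z | ∃ u ∈ F, u ⊓ x ≤ z} I :=
      Set.disjoint_left.2 fun _ ⟨u, hu, huz⟩ hz => h u hu (hI.mem_of_le hz huz)
    have hext := hmax.eq_of_subset ⟨hF.adjoin x, hdisj⟩ fun u hu => ⟨u, hu, inf_le_left⟩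
    exact hx (hext ▸ ⟨⊤, hF.top_mem, inf_le_right⟩)
  refine ⟨F, ⟨hF, Set.disjoint_left.1 hFI.symm hI.bot_mem, fun x y hxy => ?_⟩, haF le_rfl, hFI,
    hmaximal⟩
  by_contra! h
  obtain ⟨u, hu, hux⟩ := hmaximal x h.1
  obtain ⟨v, hv, hvy⟩ := hmaximal y h.2
  have hle : u ⊓ v ⊓ (x ⊔ y) ≤ u ⊓ x ⊔ v ⊓ y := by
    rw [inf_sup_left]
    exact sup_le_sup (inf_le_inf_right x inf_le_left) (inf_le_inf_right y inf_le_right)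
  exact Set.disjoint_left.1 hFI (hF.inf_mem (hF.inf_mem hu hv) hxy)
    (hI.mem_of_le (hI.sup_mem hux hvy) hle)

theorem exists_primeFilter_pair (φ : α → β → Prop)
    (hφ : ∀ ⦃x x' y y'⦄, φ x y → x ≤ x' → y ≤ y' → φ x' y')
    (hsup_left : ∀ x x' y, φ (x ⊔ x') y → φ x y ∨ φ x' y)
    (hsup_right : ∀ x y y', φ x (y ⊔ y') → φ x y ∨ φ x y')
    (hbot_left : ∀ y, ¬ φ ⊥ y) (hbot_right : ∀ x, ¬ φ x ⊥) {a : α} {b : β} (hab : φ a b) :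
    ∃ Γ Δ, PrimeFilter Γ ∧ PrimeFilter Δ ∧ a ∈ Γ ∧ b ∈ Δ ∧ (∀ x ∈ Γ, ∀ y ∈ Δ, φ x y) ∧
      (∀ x ∉ Γ, ∃ u ∈ Γ, ∃ v ∈ Δ, ¬ φ (u ⊓ x) v) ∧
      (∀ y ∉ Δ, ∃ u ∈ Γ, ∃ v ∈ Δ, ¬ φ u (v ⊓ y)) := by
  -- `Γ` is maximal for `φ · b`, then `Δ` maximal for `Γ`; `b ∈ Δ` keeps `Γ` maximal for `Δ`.
  have hIΓ : EDCIdeal {x | ¬ φ x b} :=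
    ⟨hbot_left b, fun x x' hx hle h => hx (hφ h hle le_rfl),
      fun x x' hx hx' h => (hsup_left x x' b h).elim hx hx'⟩
  obtain ⟨Γ, hΓ, haΓ, hΓI, hΓmax⟩ := exists_primeFilter_maximal_disjoint hIΓ (not_not.2 hab)
  have hIΔ : EDCIdeal {y | ∃ x ∈ Γ, ¬ φ x y} := by
    refine ⟨⟨⊤, hΓ.top_mem, hbot_right ⊤⟩, ?_, ?_⟩
    · rintro y y' ⟨x, hx, hxy⟩ hle
      exact ⟨x, hx, fun h => hxy (hφ h le_rfl hle)⟩
    · rintro y y' ⟨x, hx, hxy⟩ ⟨x', hx', hxy'⟩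
      refine ⟨x ⊓ x', hΓ.inf_mem hx hx', fun h => (hsup_right _ y y' h).elim ?_ ?_⟩
      exacts [fun h => hxy (hφ h inf_le_left le_rfl), fun h => hxy' (hφ h inf_le_right le_rfl)]
  obtain ⟨Δ, hΔ, hbΔ, hΔI, hΔmax⟩ := exists_primeFilter_maximal_disjoint hIΔ
    fun ⟨x, hx, hxb⟩ => hxb (not_not.1 (Set.disjoint_left.1 hΓI hx))
  refine ⟨Γ, Δ, hΓ, hΔ, haΓ, hbΔ, fun x hx y hy => ?_, fun x hx => ?_, fun y hy => ?_⟩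
  · by_contra h
    exact Set.disjoint_left.1 hΔI hy ⟨x, hx, h⟩
  · obtain ⟨u, hu, hux⟩ := hΓmax x hx
    exact ⟨u, hu, b, hbΔ, hux⟩
  · obtain ⟨v, hv, u, hu, huv⟩ := hΔmax y hy
    exact ⟨u, hu, v, hv, huv⟩

theorem exists_primeFilter_mem_notMem {a b : α} (h : ¬ a ≤ b) :
    ∃ F : Set α, PrimeFilter F ∧ a ∈ F ∧ b ∉ F := by
  obtain ⟨F, hF, haF, hFb, -⟩ := exists_primeFilter_maximal_disjoint (EDCIdeal.Iic b) h
  exact ⟨F, hF, haF, fun hb => Set.disjoint_left.1 hFb hb le_rfl⟩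

end Filters

namespace EDC

open OrderDual

variable {D : Type*} [DistribLattice D] [BoundedOrder D] (E : EDC D)

theorem rc_self {Γ : Set D} (hΓ : PrimeFilter Γ) : Rc E Γ Γ := fun x y =>
  ⟨fun hx hy => E.c5 x y fun h => hΓ.bot_notMem (h ▸ hΓ.inf_mem hx hy),
    fun hx hy => E.cd5 x y fun h => (hΓ.mem_or_mem (h ▸ hΓ.top_mem)).elim hx hy,
    fun hx hy hxy => hy (hΓ.mem_of_le hx (E.ll3 x y hxy)),
    fun hx hy hyx => hx (hΓ.mem_of_le hy (E.ll3 y x hyx))⟩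

variable {E} in
theorem _root_.Rc.symm {Γ Δ : Set D} (h : Rc E Γ Δ) : Rc E Δ Γ := fun x y =>
  ⟨fun hx hy => E.c4 _ _ ((h y x).1 hy hx), fun hx hy => E.cd4 _ _ ((h y x).2.1 hy hx),
    fun hx hy => (h y x).2.2.2 hy hx, fun hx hy => (h y x).2.2.1 hy hx⟩

structure CanonicalPoint where
  fst : Set D
  snd : Set D
  primeFilter_fst : PrimeFilter fst
  primeFilter_snd : PrimeFilter snd
  rc : Rc E fst snd

namespace CanonicalPoint

variable {E}

def fstDiag (p : E.CanonicalPoint) : E.CanonicalPoint :=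
  ⟨p.fst, p.fst, p.primeFilter_fst, p.primeFilter_fst, E.rc_self p.primeFilter_fst⟩

def sndDiag (p : E.CanonicalPoint) : E.CanonicalPoint :=
  ⟨p.snd, p.snd, p.primeFilter_snd, p.primeFilter_snd, E.rc_self p.primeFilter_snd⟩

theorem rc_of_eq_fst_or_snd (p : E.CanonicalPoint) {Γ Δ : Set D} (hΓ : Γ = p.fst ∨ Γ = p.snd)
    (hΔ : Δ = p.fst ∨ Δ = p.snd) : Rc E Γ Δ := by
  rcases hΓ with rfl | rfl <;> rcases hΔ with rfl | rfl
  exacts [E.rc_self p.primeFilter_fst, p.rc, p.rc.symm, E.rc_self p.primeFilter_snd]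

instance : TopologicalSpace E.CanonicalPoint where
  IsOpen U := ∀ p ∈ U, p.fstDiag ∈ U ∧ p.sndDiag ∈ U
  isOpen_univ _ _ := ⟨trivial, trivial⟩
  isOpen_inter _ _ hU hV p hp := ⟨⟨(hU p hp.1).1, (hV p hp.2).1⟩, ⟨(hU p hp.1).2, (hV p hp.2).2⟩⟩
  isOpen_sUnion _ hS := by
    rintro p ⟨U, hU, hpU⟩
    exact ⟨⟨U, hU, (hS U hU p hpU).1⟩, ⟨U, hU, (hS U hU p hpU).2⟩⟩

theorem interior_eq (A : Set E.CanonicalPoint) :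
    interior A = {p | p ∈ A ∧ p.fstDiag ∈ A ∧ p.sndDiag ∈ A} := by
  refine subset_antisymm (fun p hp => ?_) (interior_maximal (fun p hp => hp.1) ?_)
  · have hopen : IsOpen (interior A) := isOpen_interior
    exact ⟨interior_subset hp, interior_subset (hopen p hp).1, interior_subset (hopen p hp).2⟩
  · intro p hp
    exact ⟨⟨hp.2.1, hp.2.1, hp.2.1⟩, ⟨hp.2.2, hp.2.2, hp.2.2⟩⟩

theorem closure_eq (A : Set E.CanonicalPoint) :
    closure A = {p | p ∈ A ∨ p.fstDiag ∈ A ∨ p.sndDiag ∈ A} := by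
  ext p
  simp only [closure_eq_compl_interior_compl, interior_eq, Set.mem_compl_iff, Set.mem_ofPred_eq]
  tauto

end CanonicalPoint

open CanonicalPoint

def canonicalSet (a : D) : Set E.CanonicalPoint := {p | a ∈ p.fst ∨ a ∈ p.snd}

variable {E}

theorem interior_canonicalSet (a : D) :
    interior (E.canonicalSet a) = {p | a ∈ p.fst ∧ a ∈ p.snd} := by
  ext p
  simp only [interior_eq, canonicalSet, fstDiag, sndDiag, Set.mem_ofPred_eq]
  tauto

theorem closure_interior_canonicalSet (a : D) :
    closure (interior (E.canonicalSet a)) = E.canonicalSet a := by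
  rw [interior_canonicalSet, closure_eq]
  ext p
  simp only [canonicalSet, fstDiag, sndDiag, Set.mem_ofPred_eq]
  tauto

theorem canonicalSet_bot : E.canonicalSet ⊥ = ∅ :=
  Set.eq_empty_of_forall_notMem fun p hp =>
    hp.elim p.primeFilter_fst.bot_notMem p.primeFilter_snd.bot_notMem

theorem canonicalSet_top : E.canonicalSet ⊤ = Set.univ :=
  Set.eq_univ_of_forall fun p => Or.inl p.primeFilter_fst.top_mem

theorem canonicalSet_sup (a b : D) :
    E.canonicalSet (a ⊔ b) = E.canonicalSet a ∪ E.canonicalSet b := by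
  ext p
  simp only [canonicalSet, Set.mem_union, Set.mem_ofPred_eq, p.primeFilter_fst.sup_mem_iff,
    p.primeFilter_snd.sup_mem_iff]
  tauto

theorem canonicalSet_inf (a b : D) :
    E.canonicalSet (a ⊓ b) = closure (interior (E.canonicalSet a ∩ E.canonicalSet b)) := by
  have hint :
      interior (E.canonicalSet a ∩ E.canonicalSet b) = interior (E.canonicalSet (a ⊓ b)) := by
    ext p
    simp only [interior_inter, interior_canonicalSet, Set.mem_inter_iff, Set.mem_ofPred_eq,
      p.primeFilter_fst.inf_mem_iff, p.primeFilter_snd.inf_mem_iff]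
    tauto
  rw [hint, closure_interior_canonicalSet]

theorem exists_point_of_C {a b : D} (h : E.C a b) :
    ∃ p : E.CanonicalPoint, a ∈ p.fst ∧ b ∈ p.snd := by
  obtain ⟨Γ, Δ, hΓ, hΔ, haΓ, hbΔ, hC, hΓmax, hΔmax⟩ :=
    exists_primeFilter_pair E.C (fun _ _ _ _ h hx hy => E.c2 _ _ _ _ h hx hy)
      (fun x x' y h => (E.c3 y x x' (E.c4 _ _ h)).imp (E.c4 _ _) (E.c4 _ _))
      E.c3 (fun _ h => (E.c1 _ _ h).1 rfl) (fun _ h => (E.c1 _ _ h).2 rfl) h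
  refine ⟨⟨Γ, Δ, hΓ, hΔ, fun x y => ⟨(hC x · y), ?_, ?_, ?_⟩⟩, haΓ, hbΔ⟩
  · intro hx hy
    obtain ⟨u, hu, v, hv, huxv⟩ := hΓmax x hx
    obtain ⟨u', hu', v', hv', hu'vy⟩ := hΔmax y hy
    exact E.mc2 (u ⊓ u') (v ⊓ v') y x
      (fun hc => hu'vy (E.c2 _ _ _ _ hc inf_le_right (inf_le_inf_right y inf_le_right)))
      (hC _ (hΓ.inf_mem hu hu') _ (hΔ.inf_mem hv hv'))
      (fun hc => huxv (E.c2 _ _ _ _ hc (inf_le_inf_right x inf_le_left) inf_le_left))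
  · intro hx hy hxy
    obtain ⟨u, hu, v, hv, huvy⟩ := hΔmax y hy
    have hC' : E.C (u ⊓ x) (v ⊓ y) :=
      E.mc1 _ _ _ (hC _ (hΓ.inf_mem hu hx) _ hv) (E.ll4 _ _ _ _ inf_le_right hxy le_rfl)
    exact huvy (E.c2 _ _ _ _ hC' inf_le_left le_rfl)
  · intro hx hy hyx
    obtain ⟨u, hu, v, hv, huxv⟩ := hΓmax x hx
    have hC' : E.C (v ⊓ y) (u ⊓ x) :=
      E.mc1 _ _ _ (E.c4 _ _ (hC _ hu _ (hΔ.inf_mem hv hy))) (E.ll4 _ _ _ _ inf_le_right hyx le_rfl)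
    exact huxv (E.c2 _ _ _ _ (E.c4 _ _ hC') le_rfl inf_le_left)

theorem exists_point_of_Cd {a b : D} (h : E.Cd a b) :
    ∃ p : E.CanonicalPoint, a ∉ p.fst ∧ b ∉ p.snd := by
  obtain ⟨Γ, Δ, hΓ, hΔ, haΓ, hbΔ, hCd, hΓmax, hΔmax⟩ :=
    exists_primeFilter_pair (α := Dᵒᵈ) (β := Dᵒᵈ) (fun x y => E.Cd (ofDual x) (ofDual y))
      (fun _ _ _ _ h hx hy => E.cd2 _ _ _ _ h hx hy)
      (fun x x' y h => (E.cd3 (ofDual y) _ _ (E.cd4 _ _ h)).imp (E.cd4 _ _) (E.cd4 _ _))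
      (fun _ _ _ h => E.cd3 _ _ _ h) (fun _ h => (E.cd1 _ _ h).1 rfl)
      (fun _ h => (E.cd1 _ _ h).2 rfl) (a := toDual a) (b := toDual b) h
  refine ⟨⟨_, _, hΓ.compl_dual, hΔ.compl_dual, fun x y => ⟨?_, ?_, ?_, ?_⟩⟩,
    not_not.2 haΓ, not_not.2 hbΔ⟩
  · intro hx hy
    obtain ⟨u, hu, v, hv, huxv⟩ := hΓmax (toDual x) hx
    obtain ⟨u', hu', v', hv', hu'vy⟩ := hΔmax (toDual y) hy
    exact E.mcd2 (ofDual u ⊔ ofDual u') (ofDual v ⊔ ofDual v') y x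
      (fun hc => hu'vy (E.cd2 _ _ _ _ hc le_sup_right (sup_le_sup_right le_sup_right y)))
      (hCd _ (hΓ.inf_mem hu hu') _ (hΔ.inf_mem hv hv'))
      (fun hc => huxv (E.cd2 _ _ _ _ hc (sup_le_sup_right le_sup_left x) le_sup_left))
  · intro hx hy
    exact hCd _ (not_not.1 hx) _ (not_not.1 hy)
  · intro hx hy hxy
    obtain ⟨u, hu, v, hv, huxv⟩ := hΓmax (toDual x) hx
    have hCd' : E.Cd (ofDual v ⊔ y) (ofDual u ⊔ x) :=
      E.mcd1 _ _ _ (E.cd4 _ _ (hCd _ hu _ (hΔ.inf_mem hv (not_not.1 hy))))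
        (E.ll4 _ _ _ _ le_rfl hxy le_sup_right)
    exact huxv (E.cd2 _ _ _ _ (E.cd4 _ _ hCd') le_rfl le_sup_left)
  · intro hx hy hyx
    obtain ⟨u, hu, v, hv, huvy⟩ := hΔmax (toDual y) hy
    have hCd' : E.Cd (ofDual u ⊔ x) (ofDual v ⊔ y) :=
      E.mcd1 _ _ _ (hCd _ (hΓ.inf_mem hu (not_not.1 hx)) _ hv)
        (E.ll4 _ _ _ _ le_rfl hyx le_sup_right)
    exact huvy (E.cd2 _ _ _ _ hCd' le_sup_left le_rfl)

theorem exists_point_of_not_Ll {a b : D} (h : ¬ E.Ll a b) :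
    ∃ p : E.CanonicalPoint, a ∈ p.fst ∧ b ∉ p.snd := by
  obtain ⟨Γ, Δ, hΓ, hΔ, haΓ, hbΔ, hLl, hΓmax, hΔmax⟩ :=
    exists_primeFilter_pair (β := Dᵒᵈ) (fun x y => ¬ E.Ll x (ofDual y))
      (fun _ _ _ _ h hx hy hc => h (E.ll4 _ _ _ _ hx hc hy))
      (fun x x' y h => by
        by_contra! hno
        exact h (E.ll5 _ _ _ hno.1 hno.2))
      (fun x y y' h => by
        by_contra! hno
        exact h (E.ll6 _ _ _ hno.1 hno.2))
      (fun _ h => h (E.ll4 _ _ _ _ le_rfl E.ll1 bot_le))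
      (fun _ h => h (E.ll4 _ _ _ _ le_top E.ll2 le_rfl)) (b := toDual b) h
  refine ⟨⟨Γ, _, hΓ, hΔ.compl_dual, fun x y => ⟨?_, ?_, ?_, ?_⟩⟩, haΓ, not_not.2 hbΔ⟩
  · intro hx hy
    obtain ⟨u, hu, v, hv, huvy⟩ := hΔmax (toDual y) hy
    by_contra hxy
    refine hLl _ (hΓ.inf_mem hu hx) _ hv (E.mll2 y _ _ ?_ ?_)
    · exact fun hc => hxy (E.c4 _ _ (E.c2 _ _ _ _ hc le_rfl inf_le_right))
    · exact E.ll4 _ _ _ _ inf_le_left (not_not.1 huvy) (sup_comm (ofDual v) y).le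
  · intro hx hy
    obtain ⟨u, hu, v, hv, huxv⟩ := hΓmax x hx
    by_contra hxy
    refine hLl _ hu _ (hΔ.inf_mem hv (not_not.1 hy)) (E.mll1 x _ _ ?_ ?_)
    · exact fun hc => hxy (E.cd2 _ _ _ _ hc le_rfl le_sup_right)
    · exact E.ll4 _ _ _ _ (inf_comm x u).le (not_not.1 huxv) le_sup_left
  · intro hx hy
    exact hLl _ hx _ (not_not.1 hy)
  · intro hx hy hyx
    obtain ⟨u, hu, v, hv, huxv⟩ := hΓmax x hx
    obtain ⟨u', hu', v', hv', hu'vy⟩ := hΔmax (toDual y) hy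
    refine hLl _ (hΓ.inf_mem hu hu') _ (hΔ.inf_mem hv hv') (E.ll7 y x _ _ hyx ?_ ?_)
    · exact E.ll4 _ _ _ _ ((inf_comm _ _).trans_le (inf_le_inf_right x inf_le_left))
        (not_not.1 huxv) le_sup_left
    · exact E.ll4 _ _ _ _ inf_le_right (not_not.1 hu'vy)
        (show ofDual v' ⊔ y ≤ y ⊔ (ofDual v ⊔ ofDual v') from
          sup_le (le_sup_of_le_right le_sup_right) le_sup_left)

theorem le_iff_canonicalSet_subset (a b : D) :
    a ≤ b ↔ E.canonicalSet a ⊆ E.canonicalSet b := by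
  refine ⟨fun hab p hp => hp.imp (p.primeFilter_fst.mem_of_le · hab)
    (p.primeFilter_snd.mem_of_le · hab), fun hsub => ?_⟩
  by_contra hab
  obtain ⟨Γ, hΓ, haΓ, hbΓ⟩ := exists_primeFilter_mem_notMem hab
  let q : E.CanonicalPoint := ⟨Γ, Γ, hΓ, hΓ, E.rc_self hΓ⟩
  exact (@hsub q (Or.inl haΓ)).elim hbΓ hbΓ

theorem canonicalSet_injective : Function.Injective E.canonicalSet := fun _ _ h =>
  le_antisymm ((le_iff_canonicalSet_subset _ _).2 h.le) ((le_iff_canonicalSet_subset _ _).2 h.ge)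

theorem C_iff_inter_canonicalSet_ne_empty (a b : D) :
    E.C a b ↔ E.canonicalSet a ∩ E.canonicalSet b ≠ ∅ := by
  rw [← Set.nonempty_iff_ne_empty]
  refine ⟨fun h => ?_, fun ⟨p, ha, hb⟩ => ?_⟩
  · obtain ⟨p, ha, hb⟩ := exists_point_of_C h
    exact ⟨p, Or.inl ha, Or.inr hb⟩
  · rcases ha with ha | ha <;> rcases hb with hb | hb <;>
      exact (p.rc_of_eq_fst_or_snd (by tauto) (by tauto) a b).1 ha hb

theorem Cd_iff_union_interior_canonicalSet_ne_univ (a b : D) :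
    E.Cd a b ↔ interior (E.canonicalSet a) ∪ interior (E.canonicalSet b) ≠ Set.univ := by
  simp only [interior_canonicalSet, ne_eq, Set.eq_univ_iff_forall, Set.mem_union,
    Set.mem_ofPred_eq, not_forall, not_or, not_and_or]
  refine ⟨fun h => ?_, fun ⟨p, ha, hb⟩ => ?_⟩
  · obtain ⟨p, ha, hb⟩ := exists_point_of_Cd h
    exact ⟨p, Or.inl ha, Or.inr hb⟩
  · rcases ha with ha | ha <;> rcases hb with hb | hb <;>
      exact (p.rc_of_eq_fst_or_snd (by tauto) (by tauto) a b).2.1 ha hb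

theorem Ll_iff_canonicalSet_subset_interior (a b : D) :
    E.Ll a b ↔ E.canonicalSet a ⊆ interior (E.canonicalSet b) := by
  rw [interior_canonicalSet]
  refine ⟨fun h p ha => ?_, fun hsub => ?_⟩
  · have hb : ∀ {Γ Δ}, (Γ = p.fst ∨ Γ = p.snd) → (Δ = p.fst ∨ Δ = p.snd) → a ∈ Γ → b ∈ Δ :=
      fun hΓ hΔ ha => by_contra fun hb => (p.rc_of_eq_fst_or_snd hΓ hΔ a b).2.2.1 ha hb h
    rcases ha with ha | ha
    exacts [⟨hb (.inl rfl) (.inl rfl) ha, hb (.inl rfl) (.inr rfl) ha⟩,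
      ⟨hb (.inr rfl) (.inl rfl) ha, hb (.inr rfl) (.inr rfl) ha⟩]
  · by_contra h
    obtain ⟨p, ha, hb⟩ := exists_point_of_not_Ll h
    exact hb (hsub (Or.inl ha)).2

end EDC

/-- topological representation theorem for EDC-lattices. -/
theorem stmt15 {D : Type u} [DistribLattice D] [BoundedOrder D] (E : EDC D) :
    ∃ (X : Type u) (_ : TopologicalSpace X) (h : D → Set X),
      (∀ a : D, closure (interior (h a)) = h a) ∧
      Function.Injective h ∧
      h ⊥ = ∅ ∧ h ⊤ = Set.univ ∧
      (∀ a b : D, h (a ⊔ b) = h a ∪ h b) ∧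
      (∀ a b : D, h (a ⊓ b) = closure (interior (h a ∩ h b))) ∧
      (∀ a b : D, a ≤ b ↔ h a ⊆ h b) ∧
      (∀ a b : D, E.C a b ↔ h a ∩ h b ≠ ∅) ∧
      (∀ a b : D, E.Cd a b ↔ interior (h a) ∪ interior (h b) ≠ Set.univ) ∧
      (∀ a b : D, E.Ll a b ↔ h a ⊆ interior (h b)) :=
  ⟨E.CanonicalPoint, inferInstance, E.canonicalSet, EDC.closure_interior_canonicalSet,
    EDC.canonicalSet_injective, EDC.canonicalSet_bot, EDC.canonicalSet_top,
    EDC.canonicalSet_sup, EDC.canonicalSet_inf, EDC.le_iff_canonicalSet_subset,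
    EDC.C_iff_inter_canonicalSet_ne_empty, EDC.Cd_iff_union_interior_canonicalSet_ne_univ,
    EDC.Ll_iff_canonicalSet_subset_interior⟩
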